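/- Let T be the triple intersection form of M_2^{(dP_8)^2}. Set Γ_B = D_6, Γ_1 = D_7, Γ_2 = D_8, and Γ_0 = 3(3D_5 + D_6 + 3D_7 + 3D_8) = 9D_5 + 3D_6 + 9D_7 + 9D_8. Then T is diagonal in the basis Γ_0, Γ_B, Γ_1, Γ_2: T(Γ_0,Γ_0,Γ_0) = 243, T(Γ_B,Γ_B,Γ_B) = 9, T(Γ_1,Γ_1,Γ_1) = 1, T(Γ_2,Γ_2,Γ_2) = 1, and T(X,Y,Z) = 0 whenever X, Y, Z ∈ {Γ_0, Γ_B, Γ_1, Γ_2} are not all equal. -/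

import Mathlib

/-!
A trilinear form on `ι → R` is determined by its values on triples of standard basis vectors,
so each `T(Γ_a, Γ_b, Γ_c)` is the sum of the intersection numbers `c i j k` weighted by the
products of the coordinates of `Γ_a, Γ_b, Γ_c`; evaluating these sums gives the diagonal table.
-/

namespace Stmt15

/-- The real vector space with basis `D₅, D₆, D₇, D₈` (indexed `0, 1, 2, 3`). -/
abbrev V := Fin 4 → ℝ

/-- The basis vector `D_{i+5}` (`i : Fin 4` zero-based: `D 0 = D₅, …, D 3 = D₈`). -/
def D (i : Fin 4) : V := Pi.single i 1

/-- The triple intersection numbers of `M₂^{(dP₈)²}` on basis triples, symmetric in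
the three indices: the only nonzero values, up to permutation, are
`D₅³ = −2, D₆³ = 9, D₇³ = 1, D₈³ = 1, D₅²D₆ = 1, D₅²D₇ = 1, D₅²D₈ = 1, D₅D₆² = −3,
D₅D₇² = −1, D₅D₈² = −1`. -/
def c (i j k : Fin 4) : ℝ :=
  if ({i, j, k} : Multiset (Fin 4)) = {0, 0, 0} then -2
  else if ({i, j, k} : Multiset (Fin 4)) = {1, 1, 1} then 9
  else if ({i, j, k} : Multiset (Fin 4)) = {2, 2, 2} then 1
  else if ({i, j, k} : Multiset (Fin 4)) = {3, 3, 3} then 1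
  else if ({i, j, k} : Multiset (Fin 4)) = {0, 0, 1} then 1
  else if ({i, j, k} : Multiset (Fin 4)) = {0, 0, 2} then 1
  else if ({i, j, k} : Multiset (Fin 4)) = {0, 0, 3} then 1
  else if ({i, j, k} : Multiset (Fin 4)) = {0, 1, 1} then -3
  else if ({i, j, k} : Multiset (Fin 4)) = {0, 2, 2} then -1
  else if ({i, j, k} : Multiset (Fin 4)) = {0, 3, 3} then -1
  else 0

/-- `Γ_B = D₆`. -/
def ΓB : V := D 1
/-- `Γ₁ = D₇`. -/
def Γ1 : V := D 2
/-- `Γ₂ = D₈`. -/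
def Γ2 : V := D 3
/-- `Γ₀ = 3(3D₅ + D₆ + 3D₇ + 3D₈) = 9D₅ + 3D₆ + 9D₇ + 9D₈`. -/
def Γ0 : V := (9 : ℝ) • D 0 + (3 : ℝ) • D 1 + (9 : ℝ) • D 2 + (9 : ℝ) • D 3

end Stmt15

namespace MultilinearMap

variable {R ι M : Type*} [CommSemiring R] [Fintype ι] [DecidableEq ι] [AddCommMonoid M]
  [Module R M]

theorem apply_eq_sum_pi_single {n : ℕ} (T : MultilinearMap R (fun _ : Fin n => ι → R) M)
    (v : Fin n → ι → R) :
    T v = ∑ r : Fin n → ι, (∏ m, v m (r m)) • T (fun m => Pi.single (r m) 1) := by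
  conv_lhs => rw [show v = fun m => ∑ i, v m i • Pi.single i 1 by
    ext m j; simp [Finset.sum_apply, Pi.single_apply]]
  simp only [T.map_sum, T.map_smul_univ]

theorem apply_three_eq_sum (T : MultilinearMap R (fun _ : Fin 3 => ι → R) M) (x y z : ι → R) :
    T ![x, y, z] = ∑ i, ∑ j, ∑ k,
      (x i * y j * z k) • T ![Pi.single i 1, Pi.single j 1, Pi.single k 1] := by
  rw [apply_eq_sum_pi_single, ← (Fin.consEquiv fun _ => ι).sum_comp, Fintype.sum_prod_type]
  refine Fintype.sum_congr _ _ fun i => ?_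
  rw [← (finTwoArrowEquiv ι).symm.sum_comp, Fintype.sum_prod_type]
  refine Fintype.sum_congr _ _ fun j => Fintype.sum_congr _ _ fun k => ?_
  rw [Fin.prod_univ_three]
  congr 2
  ext m : 1
  fin_cases m <;> rfl

end MultilinearMap

namespace Stmt15

theorem apply_eq_sum_mul_c {T : MultilinearMap ℝ (fun _ : Fin 3 => V) ℝ}
    (hvals : ∀ i j k : Fin 4, T ![D i, D j, D k] = c i j k) (x y z : V) :
    T ![x, y, z] = ∑ i, ∑ j, ∑ k, x i * y j * z k * c i j k := by
  simp only [T.apply_three_eq_sum x y z, smul_eq_mul]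
  exact Fintype.sum_congr _ _ fun i => Fintype.sum_congr _ _ fun j =>
    Fintype.sum_congr _ _ fun k => congrArg _ (hvals i j k)

theorem Γ0_eq : Γ0 = ![9, 3, 9, 9] := by
  ext i; fin_cases i <;> simp [Γ0, D]

theorem ΓB_eq : ΓB = ![0, 1, 0, 0] := by
  ext i; fin_cases i <;> rfl

theorem Γ1_eq : Γ1 = ![0, 0, 1, 0] := by
  ext i; fin_cases i <;> rfl

theorem Γ2_eq : Γ2 = ![0, 0, 0, 1] := by
  ext i; fin_cases i <;> rfl

def Γ : Fin 4 → V := ![Γ0, ΓB, Γ1, Γ2]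

theorem range_Γ : Set.range Γ = {Γ0, ΓB, Γ1, Γ2} := by
  simp only [Γ, Matrix.range_cons, Matrix.range_empty, Set.union_empty, Set.singleton_union]

set_option maxHeartbeats 1000000 in
theorem apply_Γ {T : MultilinearMap ℝ (fun _ : Fin 3 => V) ℝ}
    (hvals : ∀ i j k : Fin 4, T ![D i, D j, D k] = c i j k) (a b k : Fin 4) :
    T ![Γ a, Γ b, Γ k] = if a = b ∧ b = k then ![243, 9, 1, 1] a else 0 := by
  rw [apply_eq_sum_mul_c hvals]
  fin_cases a <;> fin_cases b <;> fin_cases k <;>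
    simp +decide [Fin.sum_univ_four, Γ, Γ0_eq, ΓB_eq, Γ1_eq, Γ2_eq, c] <;> norm_num

theorem statement15_general (T : MultilinearMap ℝ (fun _ : Fin 3 => V) ℝ)
    (hvals : ∀ i j k : Fin 4, T ![D i, D j, D k] = c i j k) :
    T ![Γ0, Γ0, Γ0] = 243 ∧
    T ![ΓB, ΓB, ΓB] = 9 ∧
    T ![Γ1, Γ1, Γ1] = 1 ∧
    T ![Γ2, Γ2, Γ2] = 1 ∧
    (∀ X Y Z : V, X ∈ ({Γ0, ΓB, Γ1, Γ2} : Set V) → Y ∈ ({Γ0, ΓB, Γ1, Γ2} : Set V) →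
      Z ∈ ({Γ0, ΓB, Γ1, Γ2} : Set V) → ¬(X = Y ∧ Y = Z) → T ![X, Y, Z] = 0) := by
  refine ⟨by simpa [Γ] using apply_Γ hvals 0 0 0, by simpa [Γ] using apply_Γ hvals 1 1 1,
    by simpa [Γ] using apply_Γ hvals 2 2 2, by simpa [Γ] using apply_Γ hvals 3 3 3, ?_⟩
  simp only [← range_Γ]
  rintro _ _ _ ⟨a, rfl⟩ ⟨b, rfl⟩ ⟨k, rfl⟩ hne
  rw [apply_Γ hvals, if_neg]
  rintro ⟨rfl, rfl⟩
  exact hne ⟨rfl, rfl⟩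

/-- The triple intersection form of `M₂^{(dP₈)²}` is diagonal in the basis
`Γ₀, Γ_B, Γ₁, Γ₂`: `T(Γ₀,Γ₀,Γ₀) = 243`, `T(Γ_B,Γ_B,Γ_B) = 9`, `T(Γ₁,Γ₁,Γ₁) = 1`,
`T(Γ₂,Γ₂,Γ₂) = 1`, and `T(X,Y,Z) = 0` whenever `X, Y, Z ∈ {Γ₀, Γ_B, Γ₁, Γ₂}` are not
all equal. -/
theorem statement15 (T : MultilinearMap ℝ (fun _ : Fin 3 => V) ℝ)
    (hsymm : ∀ x y z : V, T ![x, y, z] = T ![y, x, z] ∧ T ![x, y, z] = T ![x, z, y])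
    (hvals : ∀ i j k : Fin 4, T ![D i, D j, D k] = c i j k) :
    T ![Γ0, Γ0, Γ0] = 243 ∧
    T ![ΓB, ΓB, ΓB] = 9 ∧
    T ![Γ1, Γ1, Γ1] = 1 ∧
    T ![Γ2, Γ2, Γ2] = 1 ∧
    (∀ X Y Z : V, X ∈ ({Γ0, ΓB, Γ1, Γ2} : Set V) → Y ∈ ({Γ0, ΓB, Γ1, Γ2} : Set V) →
      Z ∈ ({Γ0, ΓB, Γ1, Γ2} : Set V) → ¬(X = Y ∧ Y = Z) → T ![X, Y, Z] = 0) :=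
  statement15_general T hvals

end Stmt15
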